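/- Let α < 0 < β, ε > 0, χ ∈ {−1, 0, 1}, and let p < q with ℓ := q − p, and let ℓ_α, ℓ_β ∈ [0, ε/2] be the phase lengths of [p,q]. Set v := (2χ + ∫_p^q g(s/ε) ds)/ℓ and, for any constant c ∈ ℝ, let n(x) := c + ∫_p^x (v − g(s/ε)) ds. Then for every x with p ≤ x and x + ε ≤ q one has n(x + ε) − n(x) = (ε/(2ℓ))(4χ + (β−α)(ℓ_β − ℓ_α)). Moreover, if in addition 0 < ε < 8/(β−α) and χ ≠ 0, then n(x + ε) − n(x) is strictly positive when χ = 1 and strictly negative when χ = −1. -/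

import Mathlib

/-!
Over any full period the forcing `g(·/ε)` has mean `(α + β)/2`, so the field gains
`ε (v - (α + β)/2)` over `[x, x + ε]`; inserting the value of `v` leaves
`ε/(2ℓ) (4χ + (β - α)(ℓ_β - ℓ_α))`. Both phase lengths lie in `[0, ε/2]`, so
`|(β - α)(ℓ_β - ℓ_α)| ≤ ε (β - α)/2 < 4`, and the sign is that of `χ`.
-/

open MeasureTheory Set

/-- The 1-periodic forcing term: `α` within distance `1/4` of the integers, `β` otherwise. -/
noncomputable def g (α β x : ℝ) : ℝ := if |x - (round x : ℝ)| ≤ 1/4 then α else β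

/-- The edge `[p,q]` with endpoint values `a`, `b` is calibrated with velocity `v` by the
Lipschitz field `n : [p,q] → [-1,1]` satisfying `n' = v - g(·/ε)` a.e. on `[p,q]`. -/
def Calibrates (α β ε p q a b v : ℝ) (n : ℝ → ℝ) : Prop :=
  (∃ K : NNReal, LipschitzOnWith K n (Icc p q)) ∧
  (∀ x ∈ Icc p q, n x ∈ Icc (-1 : ℝ) 1) ∧
  n p = a ∧ n q = b ∧
  ∀ᵐ x ∂(volume.restrict (Icc p q)), HasDerivAt n (v - g α β (x / ε)) x

section Forcing

variable (α β : ℝ)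

theorem g_eq_ite_fract (x : ℝ) :
    g α β x = if min (Int.fract x) (1 - Int.fract x) ≤ 1/4 then α else β := by
  rw [g, abs_sub_round_eq_min]

theorem measurable_g : Measurable (g α β) := by
  simp only [funext (g_eq_ite_fract α β)]
  refine Measurable.ite (measurableSet_le ?_ measurable_const) measurable_const measurable_const
  exact measurable_fract.min (measurable_const.sub measurable_fract)

theorem g_periodic : Function.Periodic (g α β) 1 := by
  intro x
  simp only [g_eq_ite_fract, Int.fract_add_one]

theorem abs_g_le (x : ℝ) : |g α β x| ≤ |α| + |β| := by
  unfold g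
  split_ifs
  · exact le_add_of_nonneg_right (abs_nonneg β)
  · exact le_add_of_nonneg_left (abs_nonneg α)

theorem g_of_abs_le {u : ℝ} (hu : |u| ≤ 1/4) : g α β u = α := by
  have hround : round u = 0 := by
    rw [round_eq_zero_iff]
    constructor <;> linarith [abs_le.mp hu]
  simp only [g, hround, Int.cast_zero, sub_zero, if_pos hu]

theorem g_of_mem_Ioo {u : ℝ} (hu : u ∈ Ioo (1/4 : ℝ) (3/4)) : g α β u = β := by
  have hfract : Int.fract u = u :=
    Int.fract_eq_self.mpr ⟨by linarith [hu.1], by linarith [hu.2]⟩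
  rw [g_eq_ite_fract, hfract, if_neg]
  exact not_le.mpr (lt_min hu.1 (by linarith [hu.2]))

theorem intervalIntegrable_g_div (ε a b : ℝ) :
    IntervalIntegrable (fun s => g α β (s / ε)) volume a b :=
  intervalIntegrable_const.mono_fun'
    ((measurable_g α β).comp (measurable_id.div_const ε)).aestronglyMeasurable
    (Filter.Eventually.of_forall fun s => abs_g_le α β (s / ε))

theorem integral_g_period : ∫ u in (-(1/4) : ℝ)..(3/4), g α β u = (α + β) / 2 := by
  have hα : ∫ u in (-(1/4) : ℝ)..(1/4), g α β u = α / 2 := by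
    rw [intervalIntegral.integral_congr (g := fun _ => α)]
    · norm_num; ring
    · intro u hu
      rw [uIcc_of_le (by norm_num)] at hu
      exact g_of_abs_le α β (abs_le.mpr hu)
  have hβ : ∫ u in (1/4 : ℝ)..(3/4), g α β u = β / 2 := by
    rw [intervalIntegral.integral_of_le (by norm_num), integral_Ioc_eq_integral_Ioo,
      setIntegral_congr_fun measurableSet_Ioo (g := fun _ => β) fun u hu => g_of_mem_Ioo α β hu]
    norm_num; ring
  have hint : ∀ a b : ℝ, IntervalIntegrable (g α β) volume a b := by
    simpa using intervalIntegrable_g_div α β 1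
  rw [← intervalIntegral.integral_add_adjacent_intervals (hint _ (1/4)) (hint _ _), hα, hβ]
  ring

theorem integral_g_div_add_period {ε : ℝ} (hε : ε ≠ 0) (x : ℝ) :
    ∫ s in x..x + ε, g α β (s / ε) = ε * ((α + β) / 2) := by
  have hper : Function.Periodic (fun s => g α β (s / ε)) ε := by
    simpa using (g_periodic α β).div_const ε
  rw [hper.intervalIntegral_add_eq x (-(ε / 4)), intervalIntegral.integral_comp_div _ hε,
    show -(ε / 4) / ε = -(1 / 4) by field_simp,
    show (-(ε / 4) + ε) / ε = 3 / 4 by field_simp; ring, integral_g_period, smul_eq_mul]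

end Forcing

theorem const_add_integral_sub_const_add_integral {f : ℝ → ℝ}
    (hf : ∀ a b, IntervalIntegrable f volume a b) (c v p x y : ℝ) :
    (c + ∫ s in p..y, (v - f s)) - (c + ∫ s in p..x, (v - f s))
      = (y - x) * v - ∫ s in x..y, f s := by
  have hint : ∀ a b, IntervalIntegrable (fun s => v - f s) volume a b :=
    fun a b => intervalIntegrable_const.sub (hf a b)
  rw [add_sub_add_left_eq_sub, intervalIntegral.integral_interval_sub_left (hint p y) (hint p x),
    intervalIntegral.integral_sub intervalIntegrable_const (hf x y),
    intervalIntegral.integral_const, smul_eq_mul]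

theorem abs_mul_sub_lt_four {d ε a b : ℝ} (hε : 0 < ε) (hd : ε < 8 / d)
    (ha₀ : 0 ≤ a) (ha : a ≤ ε / 2) (hb₀ : 0 ≤ b) (hb : b ≤ ε / 2) :
    |d * (b - a)| < 4 := by
  have hd₀ : 0 < d := (div_pos_iff_of_pos_left (by norm_num)).mp (hε.trans hd)
  have hεd : ε * d < 8 := (lt_div_iff₀ hd₀).mp hd
  calc |d * (b - a)| = d * |b - a| := by rw [abs_mul, abs_of_pos hd₀]
    _ ≤ d * (ε / 2) := by gcongr; exact abs_sub_le_of_nonneg_of_le hb₀ hb ha₀ ha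
    _ < 4 := by linarith

theorem stmt6_general (α β ε p q χ c lα lβ v : ℝ) (hε0 : 0 < ε)
    (hpq : p < q)
    (hlα0 : 0 ≤ lα) (hlα1 : lα ≤ ε / 2) (hlβ0 : 0 ≤ lβ) (hlβ1 : lβ ≤ ε / 2)
    (hint : ∫ s in p..q, g α β (s / ε)
      = (α + β) / 2 * ((q - p) - lα - lβ) + α * lα + β * lβ)
    (hv : v = (2 * χ + ∫ s in p..q, g α β (s / ε)) / (q - p))
    (n : ℝ → ℝ) (hn : n = fun x => c + ∫ s in p..x, (v - g α β (s / ε))) :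
    ∀ x : ℝ, p ≤ x → x + ε ≤ q →
      n (x + ε) - n x = ε / (2 * (q - p)) * (4 * χ + (β - α) * (lβ - lα)) ∧
      (ε < 8 / (β - α) →
        (χ = 1 → 0 < n (x + ε) - n x) ∧ (χ = -1 → n (x + ε) - n x < 0)) := by
  intro x _ _
  have hincrement : n (x + ε) - n x = ε / (2 * (q - p)) * (4 * χ + (β - α) * (lβ - lα)) := by
    rw [hn, const_add_integral_sub_const_add_integral (intervalIntegrable_g_div α β ε),
      integral_g_div_add_period α β hε0.ne', hv, hint]
    field_simp [sub_ne_zero.mpr hpq.ne']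
    ring
  refine ⟨hincrement, fun hε8 => ?_⟩
  have hphase := abs_lt.mp (abs_mul_sub_lt_four hε0 hε8 hlα0 hlα1 hlβ0 hlβ1)
  have hscale : 0 < ε / (2 * (q - p)) := by have := sub_pos.mpr hpq; positivity
  rw [hincrement]
  constructor
  · rintro rfl
    exact mul_pos hscale (by linarith)
  · rintro rfl
    exact mul_neg_of_pos_of_neg hscale (by linarith)

theorem stmt6 (α β ε p q χ c lα lβ v : ℝ) (hα : α < 0) (hβ : 0 < β) (hε0 : 0 < ε)
    (hχ : χ = -1 ∨ χ = 0 ∨ χ = 1) (hpq : p < q)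
    (hlα0 : 0 ≤ lα) (hlα1 : lα ≤ ε / 2) (hlβ0 : 0 ≤ lβ) (hlβ1 : lβ ≤ ε / 2)
    (hsum : lα + lβ = (q - p) - ε * (⌊(q - p) / ε⌋ : ℝ))
    (hint : ∫ s in p..q, g α β (s / ε)
      = (α + β) / 2 * ((q - p) - lα - lβ) + α * lα + β * lβ)
    (hv : v = (2 * χ + ∫ s in p..q, g α β (s / ε)) / (q - p))
    (n : ℝ → ℝ) (hn : n = fun x => c + ∫ s in p..x, (v - g α β (s / ε))) :
    ∀ x : ℝ, p ≤ x → x + ε ≤ q →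
      n (x + ε) - n x = ε / (2 * (q - p)) * (4 * χ + (β - α) * (lβ - lα)) ∧
      (ε < 8 / (β - α) →
        (χ = 1 → 0 < n (x + ε) - n x) ∧ (χ = -1 → n (x + ε) - n x < 0)) :=
  stmt6_general α β ε p q χ c lα lβ v hε0 hpq hlα0 hlα1 hlβ0 hlβ1 hint hv n hn
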